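/- arXiv:1707.01713 — 2 statements merged into one kernel-verified Lean document; each statement's English description precedes it below -/
import Mathlib

section
/- Let σ⁺, σ⁻ span a totally isotropic 2-plane in ℝ^{4,2} and let 𝔭, 𝔮 ∈ ℝ^{4,2}. Define linear polynomials p(t) = 𝔭 − t(σ⁺⊙σ⁻)(𝔭) and q(t) = 𝔮 − t(σ⁺⊙σ⁻)(𝔮), and set g_∞(α,β) = (α₀,β₁) + (β₀,α₁) for polynomials α(t) = α₀ + tα₁, β(t) = β₀ + tβ₁. Then g_∞(p,p)·g_∞(q,q) − g_∞(p,q)² = −((σ⁺∧σ⁻)(𝔭), 𝔮)². -/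
/-- The standard symmetric bilinear form of signature (4,2) on ℝ⁶, modelling ℝ^{4,2}. -/
noncomputable def form : LinearMap.BilinForm ℝ (Fin 6 → ℝ) :=
  Matrix.toBilin' (Matrix.diagonal fun i : Fin 6 => if (i : ℕ) < 4 then (1:ℝ) else -1)

/-- The skew endomorphism a∧b : c ↦ (a,c)b − (b,c)a. -/
noncomputable def wedge (a b : Fin 6 → ℝ) : (Fin 6 → ℝ) →ₗ[ℝ] (Fin 6 → ℝ) :=
  (form a).smulRight b - (form b).smulRight a

/-- The symmetric product a⊙b applied to v : ½((a,v)b + (b,v)a). -/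
noncomputable def sprod (a b v : Fin 6 → ℝ) : Fin 6 → ℝ :=
  ((1:ℝ)/2) • (form a v • b + form b v • a)

lemma form_comm (x y : Fin 6 → ℝ) : form x y = form y x := by
  simp [form, Matrix.toBilin'_apply, Matrix.diagonal, Finset.mul_sum]
  exact Finset.sum_congr rfl fun i _ => by ring

/-- For p(t) = 𝔭 − t(σ⁺⊙σ⁻)(𝔭) and q(t) = 𝔮 − t(σ⁺⊙σ⁻)(𝔮), with
g_∞(α,β) = (α₀,β₁) + (β₀,α₁), one has
g_∞(p,p)g_∞(q,q) − g_∞(p,q)² = −((σ⁺∧σ⁻)(𝔭),𝔮)². -/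
theorem ginfty_discriminant (σp σm pp qq : Fin 6 → ℝ)
    (hind : LinearIndependent ℝ ![σp, σm])
    (h1 : form σp σp = 0) (h2 : form σp σm = 0) (h3 : form σm σm = 0) :
    (2 * form pp (-(sprod σp σm pp))) * (2 * form qq (-(sprod σp σm qq)))
        - (form pp (-(sprod σp σm qq)) + form qq (-(sprod σp σm pp))) ^ 2
      = -(form (wedge σp σm pp) qq) ^ 2 := by
  simp only [sprod, wedge, map_neg, map_smul, map_add, LinearMap.sub_apply,
    LinearMap.smulRight_apply, LinearMap.smul_apply, map_sub, smul_eq_mul]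
  rw [form_comm pp σm, form_comm pp σp, form_comm qq σm, form_comm qq σp]
  ring
end

section
/- Let s and ŝ be 1-dimensional lightlike subspaces of ℝ^{4,2} with (s,ŝ) ≠ 0, let m ≠ 0, and let p(t) = Σ_{k=0}^{d} p_k t^k be a vector-valued polynomial such that the component of p(t) in ŝ (under the decomposition ℝ^{4,2} = s ⊕ ŝ ⊕ (s⊕ŝ)^⊥) is a polynomial of degree at most d−1. Then t ↦ (1 − t/m)·Γ(1 − t/m)p(t) is a vector-valued polynomial of degree at most d+1, where Γ(u) acts by u on ŝ, by 1/u on s, and by the identity on (s⊕ŝ)^⊥. Moreover, if additionally (p(m), ŝ) = 0, then t ↦ Γ(1 − t/m)p(t) is itself a polynomial of degree at most d, and (Γ(1−t/m)p(t), Γ(1−t/m)p(t)) = (p(t), p(t)) for all t ≠ m. -/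
/-- The s-component of v in the decomposition ℝ^{4,2} = s ⊕ ŝ ⊕ (s⊕ŝ)^⊥,
where s = ⟨σ⟩ and ŝ = ⟨σh⟩ are non-orthogonal null lines. -/
noncomputable def compS (σ σh v : Fin 6 → ℝ) : Fin 6 → ℝ :=
  (form v σh / form σ σh) • σ

/-- The ŝ-component of v. -/
noncomputable def compSh (σ σh v : Fin 6 → ℝ) : Fin 6 → ℝ :=
  (form v σ / form σ σh) • σh

/-- The transformation Γ(u) acting by 1/u on s, by u on ŝ and by the identity
on (s⊕ŝ)^⊥. -/
noncomputable def gammaMap (σ σh : Fin 6 → ℝ) (u : ℝ) (v : Fin 6 → ℝ) : Fin 6 → ℝ :=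
  u⁻¹ • compS σ σh v + u • compSh σ σh v + (v - compS σ σh v - compSh σ σh v)

lemma form_comm_s17 (v w : Fin 6 → ℝ) : form v w = form w v := by
  simp [form, Matrix.toBilin'_apply', dotProduct, Matrix.mulVec,
    Matrix.diagonal, Finset.mul_sum, mul_comm]

noncomputable def pol (v : ℕ → Fin 6 → ℝ) (n : ℕ) (t : ℝ) : Fin 6 → ℝ :=
  ∑ k ∈ Finset.range n, t ^ k • v k

def shf (v : ℕ → Fin 6 → ℝ) : ℕ → Fin 6 → ℝ
  | 0 => 0
  | k+1 => v k

lemma pol_shf (v : ℕ → Fin 6 → ℝ) (n : ℕ) (t : ℝ) :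
    pol (shf v) (n+1) t = t • pol v n t := by
  unfold pol
  rw [Finset.sum_range_succ', Finset.smul_sum]
  simp [shf, pow_succ', smul_smul]

lemma pol_add (v w : ℕ → Fin 6 → ℝ) (n : ℕ) (t : ℝ) :
    pol (fun k => v k + w k) n t = pol v n t + pol w n t := by
  simp [pol, Finset.sum_add_distrib, smul_add]

lemma pol_sub (v w : ℕ → Fin 6 → ℝ) (n : ℕ) (t : ℝ) :
    pol (fun k => v k - w k) n t = pol v n t - pol w n t := by
  simp [pol, Finset.sum_sub_distrib, smul_sub]

lemma pol_smul (r : ℝ) (v : ℕ → Fin 6 → ℝ) (n : ℕ) (t : ℝ) :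
    pol (fun k => r • v k) n t = r • pol v n t := by
  simp [pol, Finset.smul_sum, smul_smul, mul_comm]

lemma pol_succ (v : ℕ → Fin 6 → ℝ) (n : ℕ) (t : ℝ) :
    pol v (n+1) t = pol v n t + t ^ n • v n := by
  simp [pol, Finset.sum_range_succ]

lemma pol_ext (v : ℕ → Fin 6 → ℝ) {n N : ℕ} (h : n ≤ N)
    (hv : ∀ k, n ≤ k → v k = 0) (t : ℝ) : pol v N t = pol v n t := by
  unfold pol
  refine (Finset.sum_subset (Finset.range_subset_range.2 h) ?_).symm
  intro k _ hk
  rw [hv k (by simpa using hk), smul_zero]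

noncomputable def mulU (m : ℝ) (v : ℕ → Fin 6 → ℝ) : ℕ → Fin 6 → ℝ :=
  fun k => v k - m⁻¹ • shf v k

lemma pol_mulU (m : ℝ) (v : ℕ → Fin 6 → ℝ) (n : ℕ) (t : ℝ) (hv : v n = 0) :
    pol (mulU m v) (n+1) t = (1 - t/m) • pol v n t := by
  unfold mulU
  rw [pol_sub, pol_smul, pol_shf, pol_succ, hv, smul_zero, add_zero,
    sub_smul, one_smul, smul_smul]
  rw [div_eq_mul_inv t m, mul_comm t m⁻¹]

lemma form_pol_left (v : ℕ → Fin 6 → ℝ) (n : ℕ) (t : ℝ) (w : Fin 6 → ℝ) :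
    form (pol v n t) w = ∑ k ∈ Finset.range n, t ^ k * form (v k) w := by
  simp [pol]

lemma compS_pol (σ σh : Fin 6 → ℝ) (v : ℕ → Fin 6 → ℝ) (n : ℕ) (t : ℝ) :
    compS σ σh (pol v n t) = pol (fun k => compS σ σh (v k)) n t := by
  unfold compS
  rw [form_pol_left, Finset.sum_div, Finset.sum_smul]
  unfold pol
  congr 1; ext k
  rw [mul_div_assoc, smul_smul]

lemma compSh_pol (σ σh : Fin 6 → ℝ) (v : ℕ → Fin 6 → ℝ) (n : ℕ) (t : ℝ) :
    compSh σ σh (pol v n t) = pol (fun k => compSh σ σh (v k)) n t := by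
  unfold compSh
  rw [form_pol_left, Finset.sum_div, Finset.sum_smul]
  unfold pol
  congr 1; ext k
  rw [mul_div_assoc, smul_smul]

lemma gamma_isometry (σ σh : Fin 6 → ℝ)
    (h1 : form σ σ = 0) (h2 : form σh σh = 0) (hn : form σ σh ≠ 0)
    {u : ℝ} (hu : u ≠ 0) (v : Fin 6 → ℝ) :
    form (gammaMap σ σh u v) (gammaMap σ σh u v) = form v v := by
  unfold gammaMap compS compSh
  have hs : form σh σ = form σ σh := form_comm_s17 _ _
  have hv1 : form σ v = form v σ := form_comm_s17 _ _
  have hv2 : form σh v = form v σh := form_comm_s17 _ _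
  simp only [map_add, map_sub, map_smul, LinearMap.add_apply, LinearMap.sub_apply,
    LinearMap.smul_apply, smul_eq_mul, hs, hv1, hv2, h1, h2]
  field_simp
  ring

lemma mulU_vanish (m : ℝ) (v : ℕ → Fin 6 → ℝ) (n : ℕ)
    (h : ∀ j, n ≤ j → v j = 0) : ∀ j, n + 1 ≤ j → mulU m v j = 0 := by
  intro j hj
  unfold mulU
  match j, hj with
  | (i+1), hj => simp [shf, h i (by omega), h (i+1) (by omega)]

/-- Darboux transformation of a polynomial conserved quantity: if the
ŝ-component of p(t) = Σ_{k=0}^d p_k t^k has degree at most d−1, then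
(1−t/m)·Γ(1−t/m)p(t) is a polynomial of degree at most d+1; if moreover
(p(m),ŝ) = 0 then Γ(1−t/m)p(t) is itself a polynomial of degree at most d, and
it has the same norm polynomial as p. -/
theorem darboux_polynomial_conserved (σ σh : Fin 6 → ℝ)
    (hσ : σ ≠ 0) (hσh : σh ≠ 0)
    (h1 : form σ σ = 0) (h2 : form σh σh = 0) (hn : form σ σh ≠ 0)
    (m : ℝ) (hm : m ≠ 0) (d : ℕ)
    (p : ℕ → Fin 6 → ℝ) (hp : ∀ k, d < k → p k = 0)
    (htop : form (p d) σ = 0) :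
    (∃ c : ℕ → Fin 6 → ℝ, (∀ k, d + 1 < k → c k = 0) ∧
      ∀ t : ℝ, t ≠ m →
        (1 - t / m) • gammaMap σ σh (1 - t / m)
            (∑ k ∈ Finset.range (d + 1), t ^ k • p k)
          = ∑ k ∈ Finset.range (d + 2), t ^ k • c k) ∧
    (form (∑ k ∈ Finset.range (d + 1), m ^ k • p k) σh = 0 →
      (∃ c : ℕ → Fin 6 → ℝ, (∀ k, d < k → c k = 0) ∧
        ∀ t : ℝ, t ≠ m →
          gammaMap σ σh (1 - t / m) (∑ k ∈ Finset.range (d + 1), t ^ k • p k)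
            = ∑ k ∈ Finset.range (d + 1), t ^ k • c k) ∧
      (∀ t : ℝ, t ≠ m →
        form (gammaMap σ σh (1 - t / m) (∑ k ∈ Finset.range (d + 1), t ^ k • p k))
             (gammaMap σ σh (1 - t / m) (∑ k ∈ Finset.range (d + 1), t ^ k • p k))
          = form (∑ k ∈ Finset.range (d + 1), t ^ k • p k)
                 (∑ k ∈ Finset.range (d + 1), t ^ k • p k))) := by
  classical
  have hpol : ∀ (v : ℕ → Fin 6 → ℝ) (n : ℕ) (t : ℝ),
      (∑ k ∈ Finset.range n, t ^ k • v k) = pol v n t := fun _ _ _ => rfl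
  have hu : ∀ t : ℝ, t ≠ m → (1 - t / m) ≠ 0 := by
    intro t ht h
    apply ht
    have h' : t / m = 1 := by linarith
    field_simp at h'
    exact h'
  set S : ℕ → Fin 6 → ℝ := fun k => compS σ σh (p k) with hSdef
  set H : ℕ → Fin 6 → ℝ := fun k => compSh σ σh (p k) with hHdef
  set W : ℕ → Fin 6 → ℝ := fun k => p k - S k - H k with hWdef
  have hS0 : ∀ k, d + 1 ≤ k → S k = 0 := by
    intro k hk; simp [hSdef, compS, hp k (by omega)]
  have hH0 : ∀ k, d ≤ k → H k = 0 := by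
    intro k hk
    rcases eq_or_lt_of_le hk with h | h
    · simp [hHdef, compSh, ← h, htop]
    · simp [hHdef, compSh, hp k h]
  have hW0 : ∀ k, d + 1 ≤ k → W k = 0 := by
    intro k hk; simp [hWdef, hS0 k hk, hH0 k (by omega), hp k (by omega)]
  have hMH : ∀ k, d + 1 ≤ k → mulU m H k = 0 := mulU_vanish m H d hH0
  have hMMH : ∀ k, d + 2 ≤ k → mulU m (mulU m H) k = 0 := mulU_vanish m _ (d + 1) hMH
  have hMW : ∀ k, d + 2 ≤ k → mulU m W k = 0 := mulU_vanish m W (d + 1) hW0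
  have polW_eq : ∀ t : ℝ, pol W (d+1) t
      = pol p (d+1) t - pol S (d+1) t - pol H (d+1) t := by
    intro t
    rw [hWdef, pol_sub, pol_sub]
  have hgam : ∀ t : ℝ, gammaMap σ σh (1 - t / m) (pol p (d+1) t)
      = (1 - t/m)⁻¹ • pol S (d+1) t + (1 - t/m) • pol H (d+1) t + pol W (d+1) t := by
    intro t
    unfold gammaMap
    rw [compS_pol, compSh_pol, ← hSdef, ← hHdef, polW_eq]
  refine ⟨⟨fun k => S k + (mulU m (mulU m H) k + mulU m W k), ?_, ?_⟩, ?_⟩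
  · intro k hk
    simp only [hS0 k (by omega), hMMH k (by omega), hMW k (by omega)]
    simp
  · intro t ht
    have hut := hu t ht
    simp only [hpol]
    rw [hgam t, smul_add, smul_add, smul_smul, mul_inv_cancel₀ hut, one_smul]
    rw [pol_ext H (by omega : d ≤ d + 1) hH0 t,
      ← pol_mulU m H d t (hH0 d le_rfl),
      ← pol_mulU m (mulU m H) (d+1) t (hMH _ le_rfl),
      ← pol_mulU m W (d+1) t (hW0 _ le_rfl),
      ← pol_ext S (by omega : d + 1 ≤ d + 2) hS0 t,
      pol_add, pol_add, add_assoc]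
  intro hq
  set a : ℕ → ℝ := fun k => form (p k) σh with hadef
  have hqa : ∑ k ∈ Finset.range (d+1), m ^ k * a k = 0 := by
    rw [hpol, form_pol_left] at hq
    exact hq
  set Qa : Polynomial ℝ :=
    ∑ k ∈ Finset.range (d+1), Polynomial.C (a k) * Polynomial.X ^ k with hQa
  have hQaeval : ∀ t : ℝ, Qa.eval t = ∑ k ∈ Finset.range (d+1), t ^ k * a k := by
    intro t
    rw [hQa, Polynomial.eval_finset_sum]
    refine Finset.sum_congr rfl fun k _ => ?_
    simp only [Polynomial.eval_mul, Polynomial.eval_pow, Polynomial.eval_C, Polynomial.eval_X]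
    ring
  have hroot : Qa.IsRoot m := by
    rw [Polynomial.IsRoot, hQaeval]
    exact hqa
  set R := Qa /ₘ (Polynomial.X - Polynomial.C m) with hRdef
  have hfac : (Polynomial.X - Polynomial.C m) * R = Qa :=
    Polynomial.mul_divByMonic_eq_iff_isRoot.2 hroot
  have hQadeg : Qa.natDegree ≤ d := by
    rw [hQa]
    refine Polynomial.natDegree_sum_le_of_forall_le _ _ fun k hk => ?_
    exact le_trans (Polynomial.natDegree_C_mul_X_pow_le _ _) (by
      simpa using Nat.lt_succ_iff.1 (Finset.mem_range.1 hk))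
  have hRdeg : R.natDegree < d + 1 := by
    by_cases h0 : R = 0
    · simp [h0]
    · have hx : (Polynomial.X - Polynomial.C m) ≠ (0 : Polynomial ℝ) :=
        Polynomial.X_sub_C_ne_zero m
      have hmul := Polynomial.natDegree_mul hx h0
      rw [hfac, Polynomial.natDegree_X_sub_C] at hmul
      omega
  have hcoeffR : ∀ k, d + 1 ≤ k → R.coeff k = 0 := fun k hk =>
    Polynomial.coeff_eq_zero_of_natDegree_lt (lt_of_lt_of_le hRdeg hk)
  set sσ : ℕ → Fin 6 → ℝ := fun k => ((-m) * R.coeff k / form σ σh) • σ with hsdef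
  have hSeval : ∀ t : ℝ, t ≠ m →
      (1 - t/m)⁻¹ • pol S (d+1) t = pol sσ (d+1) t := by
    intro t ht
    have hut := hu t ht
    have h1' : pol S (d+1) t = (Qa.eval t / form σ σh) • σ := by
      rw [hQaeval]
      unfold pol
      rw [Finset.sum_div, Finset.sum_smul]
      refine Finset.sum_congr rfl fun k _ => ?_
      have hSk : S k = (a k / form σ σh) • σ := rfl
      rw [hSk, smul_smul, mul_div_assoc]
    have hfeval : Qa.eval t = (t - m) * R.eval t := by
      conv_lhs => rw [← hfac]
      simp
    have hkey : (1 - t/m)⁻¹ * (t - m) = -m := by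
      have hmt : (1 - t/m) * (-m) = t - m := by field_simp; ring
      rw [← hmt, ← mul_assoc, inv_mul_cancel₀ hut, one_mul]
    have hReval : R.eval t = ∑ k ∈ Finset.range (d+1), R.coeff k * t ^ k :=
      Polynomial.eval_eq_sum_range' hRdeg t
    rw [h1', smul_smul, hfeval, hReval]
    unfold pol
    rw [hsdef]
    simp only [smul_smul]
    rw [← Finset.sum_smul]
    congr 1
    rw [show (1 - t/m)⁻¹ * ((t - m) * (∑ k ∈ Finset.range (d+1), R.coeff k * t ^ k)
          / form σ σh)
        = ((1 - t/m)⁻¹ * (t - m)) * ((∑ k ∈ Finset.range (d+1), R.coeff k * t ^ k)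
          / form σ σh) from by ring, hkey, Finset.sum_div, Finset.mul_sum]
    refine Finset.sum_congr rfl fun k _ => ?_
    ring
  refine ⟨⟨fun k => sσ k + (mulU m H k + W k), ?_, ?_⟩, ?_⟩
  · intro k hk
    rw [hsdef]
    simp only [hcoeffR k (by omega), hMH k (by omega), hW0 k (by omega)]
    simp
  · intro t ht
    simp only [hpol]
    rw [hgam t, pol_ext H (by omega : d ≤ d + 1) hH0 t,
      ← pol_mulU m H d t (hH0 d le_rfl), hSeval t ht,
      pol_add, pol_add, add_assoc]
  · intro t ht
    simp only [hpol]
    exact gamma_isometry σ σh h1 h2 hn (hu t ht) _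
end
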